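/- For every rational number q0 with q0 ≠ 0, q0 ≠ 1, and q0 ≠ -1, the reduced Burau representation of B_3 specialized at q0 is faithful: the group homomorphism B_3 → GL(2, ℚ) determined by σ1 ↦ [[-q0, q0], [0, 1]] and σ2 ↦ [[1, 0], [1, -q0]] is injective. -/

import Mathlib

/-!
With `a = σ₁σ₂σ₁` and `b = σ₁σ₂` one has `a² = b³`, central in `B₃`, and every braid is
`(a²)ᵏ` times an alternating word in the letters `a` and `b, b²` (`B₃` modulo its centre is
`ℤ/2 * ℤ/3`). The Burau images satisfy `ρ(a)² = ρ(b)³ = q³`, so a braid in the kernel gives an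
alternating word with scalar Burau matrix. Pick a prime `p` with `|q|ₚ ≠ 1`; conjugating by the
coordinate swap turns the matrices at `q` into those at `q⁻¹` with `b` and `b²` exchanged, so we
may assume `|q|ₚ < 1`. Three cones in `ℚ²`, cut out by comparing the `p`-adic sizes of the two
coordinates, then play ping-pong: `ρ(a)` maps both `b`-cones into the `a`-cone and `ρ(b)`,
`ρ(b²)` map the `a`-cone into the two (disjoint) `b`-cones. Hence a nonempty alternating word
(cyclically rotated if it has the shape `a ⋯ bᵉ`) maps some cone into a disjoint one and is not
scalar, while the empty word forces `q³ᵏ = 1`, i.e. `k = 0`.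
-/

/-- The braid relation for the braid group `B₃` on generators `σ₁ = of 0`, `σ₂ = of 1`:
`σ₁σ₂σ₁ = σ₂σ₁σ₂`. -/
def braidRels3 : Set (FreeGroup (Fin 2)) :=
  {FreeGroup.of 0 * FreeGroup.of 1 * FreeGroup.of 0 *
    (FreeGroup.of 1 * FreeGroup.of 0 * FreeGroup.of 1)⁻¹}

/-- The braid group `B₃` as a presented group. -/
abbrev BraidGroup3 : Type := PresentedGroup braidRels3

/-- The standard generators `σ₁, σ₂` of `B₃`. -/
def σ₃ (i : Fin 2) : BraidGroup3 := PresentedGroup.of i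

theorem IsUnit.mul_eq_of_mul_eq_of_commute {M : Type*} [Monoid M] {a b s : M} (ha : IsUnit a)
    (hs : Commute a s) (h : a * b = s) : b * a = s :=
  ha.mul_left_cancel (by rw [← mul_assoc, h, hs.eq])

section

open Matrix

theorem Matrix.mulVec_list_prod_mem_of_isChain {ι n R : Type*} [Fintype n] [DecidableEq n]
    [Semiring R] {r : ι → ι → Prop} (M : ι → Matrix n n R) (S : ι → Set (n → R))
    (hM : ∀ x y, r x y → ∀ u ∈ S y, M x *ᵥ u ∈ S x) {x y : ι} {l : List ι}
    (hl : (x :: l ++ [y]).IsChain r) {u : n → R} (hu : u ∈ S y) :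
    ((x :: l).map M).prod *ᵥ u ∈ S x := by
  induction l generalizing x with
  | nil => simpa using hM x y (List.isChain_pair.1 hl) u hu
  | cons z l ih =>
    simp only [List.cons_append, List.isChain_cons_cons] at hl
    rw [List.map_cons, List.prod_cons, ← mulVec_mulVec]
    exact hM x z hl.1 _ (ih hl.2)

theorem Matrix.fin_two_swap_mul_swap {R : Type*} [Semiring R] :
    (!![0, 1; 1, 0] : Matrix (Fin 2) (Fin 2) R) * !![0, 1; 1, 0] = 1 := by
  simp [one_fin_two]

end

theorem Rat.exists_prime_padicNorm_ne_one {q : ℚ} (h1 : q ≠ 1) (hm1 : q ≠ -1) :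
    ∃ p, p.Prime ∧ padicNorm p q ≠ 1 := by
  by_cases hden : q.den = 1
  · have hq : (q.num : ℚ) = q := Rat.coe_int_num_of_den_eq_one hden
    have hnum : q.num.natAbs ≠ 1 := fun h => by
      rcases Int.natAbs_eq_iff.1 h with h | h
      · exact h1 (by rw [← hq, h]; simp)
      · exact hm1 (by rw [← hq, h]; simp)
    obtain ⟨p, hp, hdvd⟩ := Nat.exists_prime_and_dvd hnum
    have := Fact.mk hp
    refine ⟨p, hp, ?_⟩
    rw [← hq]
    exact ((padicNorm.int_lt_one_iff _).2 (Int.natCast_dvd.2 hdvd)).ne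
  · obtain ⟨p, hp, hdvd⟩ := Nat.exists_prime_and_dvd hden
    have := Fact.mk hp
    refine ⟨p, hp, fun hq => ?_⟩
    have hnum : padicNorm p q.num = 1 := (padicNorm.int_eq_one_iff _).2 fun h =>
      hp.one_lt.ne' (Nat.eq_one_of_dvd_coprimes q.reduced (Int.natCast_dvd.1 h) hdvd)
    have hden : padicNorm p q.den < 1 := (padicNorm.nat_lt_one_iff _).2 hdvd
    have h := congrArg (padicNorm p) (Rat.mul_den_eq_num q)
    rw [padicNorm.mul, hq, one_mul, hnum] at h
    exact hden.ne h

theorem Rat.AbsoluteValue.isNonarchimedean_padic (p : ℕ) [Fact p.Prime] :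
    IsNonarchimedean (Rat.AbsoluteValue.padic p) := fun x y => by
  simp only [Rat.AbsoluteValue.padic_eq_padicNorm]
  exact_mod_cast padicNorm.nonarchimedean

section Words

variable {M N : Type*} [Monoid M] [Monoid N]

def abLetter (a b : M) : Fin 3 → M := ![a, b, b ^ 2]

def abWord (a b : M) (l : List (Fin 3)) : M := (l.map (abLetter a b)).prod

@[simp] theorem abLetter_zero (a b : M) : abLetter a b 0 = a := rfl

@[simp] theorem abLetter_one (a b : M) : abLetter a b 1 = b := rfl

@[simp] theorem abLetter_two (a b : M) : abLetter a b 2 = b ^ 2 := rfl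

@[simp] theorem abWord_nil (a b : M) : abWord a b [] = 1 := rfl

@[simp] theorem abWord_cons (a b : M) (x : Fin 3) (l : List (Fin 3)) :
    abWord a b (x :: l) = abLetter a b x * abWord a b l := by
  simp [abWord]

@[simp] theorem abWord_singleton (a b : M) (x : Fin 3) : abWord a b [x] = abLetter a b x := by
  simp [abWord]

theorem abWord_append (a b : M) (l₁ l₂ : List (Fin 3)) :
    abWord a b (l₁ ++ l₂) = abWord a b l₁ * abWord a b l₂ := by
  simp [abWord]

theorem map_abWord (f : M →* N) (a b : M) (l : List (Fin 3)) :
    f (abWord a b l) = abWord (f a) (f b) l := by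
  induction l with
  | nil => simp
  | cons x l ih =>
    rw [abWord_cons, map_mul, ih, abWord_cons]
    congr 1
    fin_cases x <;> simp

end Words

abbrev LettersAlternate (x y : Fin 3) : Prop := x = 0 ↔ y ≠ 0

abbrev IsAlternating (l : List (Fin 3)) : Prop := l.IsChain LettersAlternate

theorem isAlternating_cons_iff_of_ne_zero {x y : Fin 3} (hx : x ≠ 0) (hy : y ≠ 0)
    (l : List (Fin 3)) : IsAlternating (x :: l) ↔ IsAlternating (y :: l) := by
  cases l <;> simp [List.isChain_cons_cons, hx, hy]

theorem exists_lettersAlternate_ne {x z : Fin 3} (h : ¬(x = 0 ∧ z ≠ 0)) :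
    ∃ y, LettersAlternate z y ∧ x ≠ y := by
  revert x z; decide

namespace BraidGroup3

theorem braid_rel : σ₃ 0 * σ₃ 1 * σ₃ 0 = σ₃ 1 * σ₃ 0 * σ₃ 1 :=
  PresentedGroup.mk_eq_mk_of_mul_inv_mem (rels := braidRels3) rfl

def Δ : BraidGroup3 := σ₃ 0 * σ₃ 1 * σ₃ 0

def β : BraidGroup3 := σ₃ 0 * σ₃ 1

theorem Δ_mul_σ₃ (i : Fin 2) : Δ * σ₃ i = σ₃ i.rev * Δ := by
  fin_cases i
  · show σ₃ 0 * σ₃ 1 * σ₃ 0 * σ₃ 0 = σ₃ 1 * (σ₃ 0 * σ₃ 1 * σ₃ 0)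
    conv_lhs => rw [braid_rel]
    group
  · show σ₃ 0 * σ₃ 1 * σ₃ 0 * σ₃ 1 = σ₃ 0 * (σ₃ 0 * σ₃ 1 * σ₃ 0)
    conv_rhs => rw [braid_rel]
    group

theorem Δ_sq_mul_σ₃ (i : Fin 2) : Δ ^ 2 * σ₃ i = σ₃ i * Δ ^ 2 := by
  rw [sq, mul_assoc, Δ_mul_σ₃, ← mul_assoc, Δ_mul_σ₃, Fin.rev_rev, mul_assoc]

theorem commute_Δ_sq (g : BraidGroup3) : Commute (Δ ^ 2) g := by
  suffices g ∈ Subgroup.centralizer {Δ ^ 2} from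
    (Subgroup.mem_centralizer_singleton_iff.mp this).symm
  exact PresentedGroup.generated_by _ _
    (fun i => Subgroup.mem_centralizer_singleton_iff.mpr (Δ_sq_mul_σ₃ i).symm) g

theorem β_pow_three : β ^ 3 = Δ ^ 2 := by
  calc β ^ 3 = (σ₃ 0 * σ₃ 1 * σ₃ 0) * (σ₃ 1 * σ₃ 0 * σ₃ 1) := by
        simp only [β, pow_succ, pow_zero, one_mul]; group
    _ = Δ ^ 2 := by rw [← braid_rel, sq, Δ]

theorem β_mul_β_sq : β * β ^ 2 = Δ ^ 2 := by rw [← β_pow_three, pow_succ' β 2]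

theorem β_sq_mul_β : β ^ 2 * β = Δ ^ 2 := by rw [← β_pow_three, pow_succ β 2]

theorem β_sq_mul_β_sq : β ^ 2 * β ^ 2 = Δ ^ 2 * β := by rw [← β_pow_three]; group

theorem Δ_sq_mul_σ₃_zero : Δ ^ 2 * σ₃ 0 = β ^ 2 * Δ := by
  rw [← β_pow_three, Δ]; simp only [β, pow_succ, pow_zero, one_mul]; group

theorem Δ_sq_mul_σ₃_zero_inv : Δ ^ 2 * (σ₃ 0)⁻¹ = Δ * β := by
  simp only [Δ, β, sq]; group

theorem Δ_sq_mul_σ₃_one : Δ ^ 2 * σ₃ 1 = Δ * β ^ 2 := by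
  simp only [Δ, β, sq]; group

theorem Δ_sq_mul_σ₃_one_inv : Δ ^ 2 * (σ₃ 1)⁻¹ = β * Δ := by
  rw [← β_pow_three, Δ]; simp only [β, pow_succ, pow_zero, one_mul]; group

def HasNormalForm (g : BraidGroup3) : Prop :=
  ∃ (k : ℤ) (l : List (Fin 3)), IsAlternating l ∧ g = (Δ ^ 2) ^ k * abWord Δ β l

theorem exists_abLetter_mul_abWord (x : Fin 3) {l : List (Fin 3)} (hl : IsAlternating l) :
    ∃ (k : ℤ) (l' : List (Fin 3)), IsAlternating l' ∧
      abLetter Δ β x * abWord Δ β l = (Δ ^ 2) ^ k * abWord Δ β l' := by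
  cases l with
  | nil => exact ⟨0, [x], .singleton x, by simp⟩
  | cons y m =>
    by_cases hxy : LettersAlternate x y
    · exact ⟨0, x :: y :: m, List.isChain_cons_cons.2 ⟨hxy, hl⟩, by simp⟩
    have hm : IsAlternating m := hl.tail
    have h12 := isAlternating_cons_iff_of_ne_zero (x := 1) (y := 2) (by decide) (by decide) m
    match x, y, hxy with
    | 0, 0, _ => exact ⟨1, m, hm, by rw [abWord_cons, ← mul_assoc]; simp [sq]⟩
    | 1, 1, _ => exact ⟨0, 2 :: m, h12.1 hl, by rw [abWord_cons, ← mul_assoc]; simp [sq]⟩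
    | 1, 2, _ => exact ⟨1, m, hm, by rw [abWord_cons, ← mul_assoc]; simp [β_mul_β_sq]⟩
    | 2, 1, _ => exact ⟨1, m, hm, by rw [abWord_cons, ← mul_assoc]; simp [β_sq_mul_β]⟩
    | 2, 2, _ =>
      exact ⟨1, 1 :: m, h12.2 hl, by
        rw [abWord_cons, ← mul_assoc]; simp [β_sq_mul_β_sq, mul_assoc]⟩
    | 0, 1, h | 0, 2, h | 1, 0, h | 2, 0, h => exact absurd h (by decide)

theorem HasNormalForm.abLetter_mul (x : Fin 3) {g : BraidGroup3} (hg : HasNormalForm g) :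
    HasNormalForm (abLetter Δ β x * g) := by
  obtain ⟨k, l, hl, rfl⟩ := hg
  obtain ⟨j, l', hl', h⟩ := exists_abLetter_mul_abWord x hl
  refine ⟨k + j, l', hl', ?_⟩
  rw [← mul_assoc, ((commute_Δ_sq _).zpow_left k).symm.eq, mul_assoc, h, zpow_add, mul_assoc]

theorem HasNormalForm.mul_of_Δ_sq_mul_eq {s g : BraidGroup3} {x y : Fin 3}
    (hs : Δ ^ 2 * s = abLetter Δ β x * abLetter Δ β y) (hg : HasNormalForm g) :
    HasNormalForm (s * g) := by
  obtain ⟨k, l, hl, h⟩ := (hg.abLetter_mul y).abLetter_mul x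
  refine ⟨-1 + k, l, hl, ?_⟩
  rw [eq_inv_mul_of_mul_eq hs, mul_assoc, mul_assoc, h, ← mul_assoc, ← zpow_neg_one, ← zpow_add]

theorem hasNormalForm (g : BraidGroup3) : HasNormalForm g := by
  have hg : g ∈ Subgroup.closure (Set.range σ₃) := by
    rw [show σ₃ = PresentedGroup.of from rfl, PresentedGroup.closure_range_of]; trivial
  induction hg using Subgroup.closure_induction_left with
  | one => exact ⟨0, [], .nil, by simp⟩
  | mul_left s hs g _ hg =>
    obtain ⟨i, rfl⟩ := hs
    fin_cases i
    · exact hg.mul_of_Δ_sq_mul_eq (x := 2) (y := 0) Δ_sq_mul_σ₃_zero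
    · exact hg.mul_of_Δ_sq_mul_eq (x := 0) (y := 2) Δ_sq_mul_σ₃_one
  | inv_mul_cancel s hs g _ hg =>
    obtain ⟨i, rfl⟩ := hs
    fin_cases i
    · exact hg.mul_of_Δ_sq_mul_eq (x := 0) (y := 1) Δ_sq_mul_σ₃_zero_inv
    · exact hg.mul_of_Δ_sq_mul_eq (x := 1) (y := 0) Δ_sq_mul_σ₃_one_inv

end BraidGroup3

section Burau

open Matrix

variable {K : Type*} [Field K] (q : K)

def burauΔ : Matrix (Fin 2) (Fin 2) K := !![0, -q ^ 2; -q, 0]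

def burauβ : Matrix (Fin 2) (Fin 2) K := !![0, -q ^ 2; 1, -q]

theorem burauβ_eq_mul : !![-q, q; 0, 1] * !![1, 0; 1, -q] = burauβ q := by
  rw [burauβ, mul_fin_two]; ring_nf

theorem burauΔ_eq_mul : burauβ q * !![-q, q; 0, 1] = burauΔ q := by
  rw [burauβ, burauΔ, mul_fin_two]; ring_nf

theorem burauΔ_sq : burauΔ q ^ 2 = q ^ 3 • 1 := by
  ext i j; fin_cases i <;> fin_cases j <;> simp [burauΔ, pow_succ, mul_assoc]

theorem burauβ_sq : burauβ q ^ 2 = !![-q ^ 2, q ^ 3; -q, 0] := by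
  rw [burauβ, sq, mul_fin_two]; ring_nf

theorem burauΔ_mulVec (u : Fin 2 → K) : burauΔ q *ᵥ u = ![-(q ^ 2 * u 1), -(q * u 0)] := by
  ext i; fin_cases i <;> simp [burauΔ, vecHead, vecTail]

theorem burauβ_mulVec (u : Fin 2 → K) : burauβ q *ᵥ u = ![-(q ^ 2 * u 1), u 0 - q * u 1] := by
  ext i; fin_cases i <;> simp [burauβ, vecHead, vecTail, sub_eq_add_neg]

theorem burauβ_sq_mulVec (u : Fin 2 → K) :
    burauβ q ^ 2 *ᵥ u = ![-(q ^ 2 * (u 0 - q * u 1)), -(q * u 0)] := by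
  ext i; fin_cases i <;> simp [burauβ_sq, vecHead, vecTail]; ring

variable {q}

theorem isUnit_abLetter_burau (hq0 : q ≠ 0) (x : Fin 3) :
    IsUnit (abLetter (burauΔ q) (burauβ q) x) := by
  have hΔ : IsUnit (burauΔ q) := by
    rw [isUnit_iff_isUnit_det, burauΔ, det_fin_two_of]; simp [hq0]
  have hβ : IsUnit (burauβ q) := by
    rw [isUnit_iff_isUnit_det, burauβ, det_fin_two_of]; simp [hq0]
  match x with
  | 0 => exact hΔ
  | 1 => exact hβ
  | 2 => exact hβ.pow 2

/-- `-x` exchanges the letters `1` and `2`, i.e. `b` and `b²`. -/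
theorem swap_mul_abLetter_burau_mul_swap (hq0 : q ≠ 0) (x : Fin 3) :
    !![0, 1; 1, 0] * abLetter (burauΔ q) (burauβ q) x * !![0, 1; 1, 0] =
      q ^ 3 • abLetter (burauΔ q⁻¹) (burauβ q⁻¹) (-x) := by
  match x with
  | 0 =>
    ext i j; fin_cases i <;> fin_cases j <;> simp [burauΔ] <;> field_simp
  | 1 =>
    rw [show (-1 : Fin 3) = 2 from rfl, abLetter_one, abLetter_two, burauβ_sq]
    ext i j; fin_cases i <;> fin_cases j <;> simp [burauβ] <;> field_simp
  | 2 =>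
    rw [show (-2 : Fin 3) = 1 from rfl, abLetter_two, abLetter_one, burauβ_sq]
    ext i j; fin_cases i <;> fin_cases j <;> simp [burauβ] <;> field_simp

theorem swap_mul_abWord_burau_mul_swap (hq0 : q ≠ 0) (l : List (Fin 3)) :
    !![0, 1; 1, 0] * abWord (burauΔ q) (burauβ q) l * !![0, 1; 1, 0] =
      (q ^ 3) ^ l.length • abWord (burauΔ q⁻¹) (burauβ q⁻¹) (l.map Neg.neg) := by
  set J : Matrix (Fin 2) (Fin 2) K := !![0, 1; 1, 0]
  have hJ : J * J = 1 := fin_two_swap_mul_swap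
  induction l with
  | nil => simpa using hJ
  | cons x l ih =>
    calc J * abWord (burauΔ q) (burauβ q) (x :: l) * J
        = J * abLetter (burauΔ q) (burauβ q) x * (J * J) * abWord (burauΔ q) (burauβ q) l * J := by
          rw [hJ, abWord_cons]; simp only [mul_one, mul_assoc]
      _ = (J * abLetter (burauΔ q) (burauβ q) x * J) *
            (J * abWord (burauΔ q) (burauβ q) l * J) := by
          simp only [mul_assoc]
      _ = _ := by
          rw [swap_mul_abLetter_burau_mul_swap hq0, ih, smul_mul_smul_comm, ← pow_succ',
            List.map_cons, abWord_cons, List.length_cons]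

end Burau

section PingPong

open Matrix

variable {K : Type*} [Field K] (v : AbsoluteValue K ℝ) (q : K)

def pingPongRegion : Fin 3 → Set (Fin 2 → K) :=
  ![{u | u 0 ≠ 0 ∧ v (u 1) ≤ v (u 0)},
    {u | u 1 ≠ 0 ∧ v (u 0) ≤ v q ^ 2 * v (u 1)},
    {u | u 1 ≠ 0 ∧ v (u 0) = v q * v (u 1)}]

theorem pingPongRegion_nonempty (x : Fin 3) : (pingPongRegion v q x).Nonempty := by
  match x with
  | 0 => exact ⟨![1, 0], by simp [pingPongRegion]⟩
  | 1 => exact ⟨![0, 1], by simp [pingPongRegion]⟩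
  | 2 => exact ⟨![q, 1], by simp [pingPongRegion]⟩

variable {v q}

theorem mem_pingPongRegion_of_smul_mem {x : Fin 3} {c : K} {u : Fin 2 → K}
    (h : c • u ∈ pingPongRegion v q x) : u ∈ pingPongRegion v q x := by
  match x, h with
  | 0, ⟨hcu, hle⟩ =>
    have hc := v.pos (left_ne_zero_of_mul hcu)
    simp only [Pi.smul_apply, smul_eq_mul, map_mul] at hle
    exact ⟨right_ne_zero_of_mul hcu, le_of_mul_le_mul_left hle hc⟩
  | 1, ⟨hcu, hle⟩ =>
    have hc := v.pos (left_ne_zero_of_mul hcu)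
    simp only [Pi.smul_apply, smul_eq_mul, map_mul] at hle
    exact ⟨right_ne_zero_of_mul hcu,
      le_of_mul_le_mul_left (hle.trans_eq (mul_left_comm _ _ _)) hc⟩
  | 2, ⟨hcu, heq⟩ =>
    have hc := v.pos (left_ne_zero_of_mul hcu)
    simp only [Pi.smul_apply, smul_eq_mul, map_mul] at heq
    exact ⟨right_ne_zero_of_mul hcu, mul_left_cancel₀ hc.ne' (heq.trans (mul_left_comm _ _ _))⟩

theorem eq_of_mem_pingPongRegion (hq0 : q ≠ 0) (hq1 : v q < 1) {x y : Fin 3} {u : Fin 2 → K}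
    (hx : u ∈ pingPongRegion v q x) (hy : u ∈ pingPongRegion v q y) : x = y := by
  have hr := v.pos hq0
  have h01 : u ∈ pingPongRegion v q 0 → u ∈ pingPongRegion v q 1 → False := by
    rintro ⟨-, hle₀⟩ ⟨hu1, hle₁⟩
    have := mul_lt_of_lt_one_left (v.pos hu1) (pow_lt_one₀ hr.le hq1 two_ne_zero)
    linarith
  have h02 : u ∈ pingPongRegion v q 0 → u ∈ pingPongRegion v q 2 → False := by
    rintro ⟨-, hle₀⟩ ⟨hu1, heq₂⟩
    have := mul_lt_of_lt_one_left (v.pos hu1) hq1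
    linarith
  have h12 : u ∈ pingPongRegion v q 1 → u ∈ pingPongRegion v q 2 → False := by
    rintro ⟨hu1, hle₁⟩ ⟨-, heq₂⟩
    have := mul_lt_of_lt_one_left (mul_pos hr (v.pos hu1)) hq1
    nlinarith
  match x, y with
  | 0, 0 | 1, 1 | 2, 2 => rfl
  | 0, 1 => exact (h01 hx hy).elim
  | 1, 0 => exact (h01 hy hx).elim
  | 0, 2 => exact (h02 hx hy).elim
  | 2, 0 => exact (h02 hy hx).elim
  | 1, 2 => exact (h12 hx hy).elim
  | 2, 1 => exact (h12 hy hx).elim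

theorem abLetter_burau_mulVec_mem (hv : IsNonarchimedean v) (hq0 : q ≠ 0) (hq1 : v q < 1)
    {x y : Fin 3} (hxy : LettersAlternate x y) {u : Fin 2 → K} (hu : u ∈ pingPongRegion v q y) :
    abLetter (burauΔ q) (burauβ q) x *ᵥ u ∈ pingPongRegion v q x := by
  have hr := v.pos hq0
  have hdom (hu : u ∈ pingPongRegion v q 0) : v (u 0 - q * u 1) = v (u 0) := by
    rw [sub_eq_add_neg]
    refine hv.add_eq_left_of_lt ?_
    rw [map_neg_eq_map, map_mul]
    exact (mul_le_mul_of_nonneg_left hu.2 hr.le).trans_lt (mul_lt_of_lt_one_left (v.pos hu.1) hq1)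
  match x, y, hxy, hu with
  | 0, 1, _, ⟨hu1, hle⟩ =>
    rw [abLetter_zero, burauΔ_mulVec]
    show -(q ^ 2 * u 1) ≠ 0 ∧ v (-(q * u 0)) ≤ v (-(q ^ 2 * u 1))
    rw [map_neg_eq_map, map_neg_eq_map, map_mul, map_mul, map_pow]
    exact ⟨by simp [hq0, hu1], (mul_le_of_le_one_left (v.nonneg _) hq1.le).trans hle⟩
  | 0, 2, _, ⟨hu1, heq⟩ =>
    rw [abLetter_zero, burauΔ_mulVec]
    show -(q ^ 2 * u 1) ≠ 0 ∧ v (-(q * u 0)) ≤ v (-(q ^ 2 * u 1))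
    rw [map_neg_eq_map, map_neg_eq_map, map_mul, map_mul, map_pow, heq]
    exact ⟨by simp [hq0, hu1], le_of_eq (by ring)⟩
  | 1, 0, _, hu =>
    rw [abLetter_one, burauβ_mulVec]
    show u 0 - q * u 1 ≠ 0 ∧ v (-(q ^ 2 * u 1)) ≤ v q ^ 2 * v (u 0 - q * u 1)
    rw [hdom hu, map_neg_eq_map, map_mul, map_pow]
    exact ⟨fun h => hu.1 (v.eq_zero.1 (by rw [← hdom hu, h, map_zero])),
      mul_le_mul_of_nonneg_left hu.2 (by positivity)⟩
  | 2, 0, _, hu =>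
    rw [abLetter_two, burauβ_sq_mulVec]
    show -(q * u 0) ≠ 0 ∧ v (-(q ^ 2 * (u 0 - q * u 1))) = v q * v (-(q * u 0))
    rw [map_neg_eq_map, map_neg_eq_map, map_mul, map_mul, map_pow, hdom hu]
    exact ⟨by simp [hq0, hu.1], by ring⟩
  | 0, 0, h, _ | 1, 1, h, _ | 1, 2, h, _ | 2, 1, h, _ | 2, 2, h, _ => exact absurd h (by decide)

end PingPong

section NotScalar

open Matrix

variable {K : Type*} [Field K] {v : AbsoluteValue K ℝ} {q : K}

theorem abWord_burau_ne_smul_one_of_isChain (hv : IsNonarchimedean v) (hq0 : q ≠ 0)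
    (hq1 : v q < 1) {x y : Fin 3} {l : List (Fin 3)}
    (hl : (x :: l ++ [y]).IsChain LettersAlternate) (hxy : x ≠ y) (c : K) :
    abWord (burauΔ q) (burauβ q) (x :: l) ≠ c • 1 := by
  intro hc
  obtain ⟨u, hu⟩ := pingPongRegion_nonempty v q y
  have h := mulVec_list_prod_mem_of_isChain (abLetter (burauΔ q) (burauβ q))
    (pingPongRegion v q) (fun _ _ h _ => abLetter_burau_mulVec_mem hv hq0 hq1 h) hl hu
  rw [← abWord, hc, smul_mulVec, one_mulVec] at h
  exact hxy (eq_of_mem_pingPongRegion hq0 hq1 (mem_pingPongRegion_of_smul_mem h) hu)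

theorem abWord_burau_ne_smul_one_of_lt_one (hv : IsNonarchimedean v) (hq0 : q ≠ 0)
    (hq1 : v q < 1) {l : List (Fin 3)} (hl : IsAlternating l) (hne : l ≠ []) (c : K) :
    abWord (burauΔ q) (burauβ q) l ≠ c • 1 := by
  obtain ⟨x, m, rfl⟩ := List.exists_cons_of_ne_nil hne
  obtain ⟨z, hz⟩ := Option.isSome_iff_exists.1 (List.getLast?_isSome.2 hne)
  by_cases hxz : x = 0 ∧ z ≠ 0
  · -- the ping-pong needs a word not of the shape `a ⋯ b^e`: rotate its first letter to the end
    obtain ⟨rfl, hz0⟩ := hxz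
    obtain _ | ⟨h, m⟩ := m
    · exact absurd (Option.some_injective _ hz).symm hz0
    intro hc
    have hc' : abWord (burauΔ q) (burauβ q) (h :: (m ++ [0])) = c • 1 := by
      rw [abWord_cons] at hc
      rw [← List.cons_append, abWord_append, abWord_singleton]
      exact (isUnit_abLetter_burau hq0 0).mul_eq_of_mul_eq_of_commute
        ((Commute.one_right _).smul_right c) hc
    obtain ⟨y, hy, hhy⟩ := exists_lettersAlternate_ne (x := h) (z := 0) (by simp)
    refine abWord_burau_ne_smul_one_of_isChain hv hq0 hq1 (l := m ++ [0]) ?_ hhy c hc'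
    have hchain : (h :: m ++ [0, y]).IsChain LettersAlternate :=
      hl.tail.append (List.isChain_pair.2 hy) (by
        rw [List.getLast?_cons_cons] at hz
        simpa [hz, LettersAlternate] using hz0)
    simpa using hchain
  · obtain ⟨y, hzy, hxy⟩ := exists_lettersAlternate_ne hxz
    exact abWord_burau_ne_smul_one_of_isChain hv hq0 hq1
      (hl.append (.singleton y) (by simpa [hz] using hzy)) hxy c

theorem abWord_burau_ne_smul_one (hv : IsNonarchimedean v) (hq0 : q ≠ 0) (hq1 : v q ≠ 1)
    {l : List (Fin 3)} (hl : IsAlternating l) (hne : l ≠ []) (c : K) :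
    abWord (burauΔ q) (burauβ q) l ≠ c • 1 := by
  rcases hq1.lt_or_gt with hlt | hgt
  · exact abWord_burau_ne_smul_one_of_lt_one hv hq0 hlt hl hne c
  intro hc
  have hl' : IsAlternating (l.map Neg.neg) :=
    (List.isChain_map _).2 (hl.imp fun x y h => by simpa [LettersAlternate] using h)
  refine abWord_burau_ne_smul_one_of_lt_one hv (inv_ne_zero hq0)
    (by rw [map_inv₀]; exact inv_lt_one_of_one_lt₀ hgt) hl' (by simpa using hne)
    (((q ^ 3) ^ l.length)⁻¹ * c) ?_
  have h := swap_mul_abWord_burau_mul_swap hq0 l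
  rw [hc, Matrix.mul_smul, mul_one, Matrix.smul_mul, fin_two_swap_mul_swap] at h
  rw [mul_smul, h, inv_smul_smul₀ (by positivity)]

end NotScalar

namespace BraidGroup3

variable {K : Type*} [Field K] {q : K}

theorem val_map_zpow_mul_abWord (hq0 : q ≠ 0) (ρ : BraidGroup3 →* GL (Fin 2) K)
    (h1 : (ρ (σ₃ 0) : Matrix (Fin 2) (Fin 2) K) = !![-q, q; 0, 1])
    (h2 : (ρ (σ₃ 1) : Matrix (Fin 2) (Fin 2) K) = !![1, 0; 1, -q]) (k : ℤ) (l : List (Fin 3)) :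
    (ρ ((Δ ^ 2) ^ k * abWord Δ β l) : Matrix (Fin 2) (Fin 2) K) =
      (q ^ 3) ^ k • abWord (burauΔ q) (burauβ q) l := by
  set ψ := (Units.coeHom _).comp ρ
  have hσ (i : Fin 2) : ψ (σ₃ i) = ρ (σ₃ i) := rfl
  have hβ : ψ β = burauβ q := by rw [β, map_mul, hσ, hσ, h1, h2, burauβ_eq_mul]
  have hΔ : ψ Δ = burauΔ q := by rw [Δ, map_mul, ← β, hβ, hσ, h1, burauΔ_eq_mul]
  have hz : ρ (Δ ^ 2) = Units.map (algebraMap K (Matrix (Fin 2) (Fin 2) K)).toMonoidHom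
      (Units.mk0 (q ^ 3) (pow_ne_zero 3 hq0)) := by
    ext1
    calc (ρ (Δ ^ 2) : Matrix (Fin 2) (Fin 2) K) = ψ Δ ^ 2 := map_pow ψ Δ 2
      _ = _ := by rw [hΔ, burauΔ_sq]; simp [Algebra.algebraMap_eq_smul_one]
  have hw : (ρ (abWord Δ β l) : Matrix (Fin 2) (Fin 2) K) = abWord (burauΔ q) (burauβ q) l := by
    rw [← hΔ, ← hβ]; exact map_abWord ψ Δ β l
  rw [map_mul, map_zpow, hz, ← map_zpow, Units.val_mul, Units.coe_map, hw]
  simp [Units.val_zpow_eq_zpow_val, Algebra.algebraMap_eq_smul_one]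

theorem injective_of_absoluteValue_ne_one {v : AbsoluteValue K ℝ} (hv : IsNonarchimedean v)
    (hq0 : q ≠ 0) (hq1 : v q ≠ 1) (ρ : BraidGroup3 →* GL (Fin 2) K)
    (h1 : (ρ (σ₃ 0) : Matrix (Fin 2) (Fin 2) K) = !![-q, q; 0, 1])
    (h2 : (ρ (σ₃ 1) : Matrix (Fin 2) (Fin 2) K) = !![1, 0; 1, -q]) :
    Function.Injective ρ := by
  rw [injective_iff_map_eq_one]
  intro g hg
  obtain ⟨k, l, hl, rfl⟩ := hasNormalForm g
  have h := congrArg Units.val hg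
  rw [val_map_zpow_mul_abWord hq0 ρ h1 h2, Units.val_one] at h
  obtain rfl | hne := eq_or_ne l []
  · have hk : (q ^ 3) ^ k = 1 := by simpa using congrFun (congrFun h 0) 0
    have hv3 : v q ^ 3 ≠ 1 := by rwa [ne_eq, pow_eq_one_iff_of_nonneg (v.nonneg q) three_ne_zero]
    have hk0 : k = 0 := by
      refine (zpow_eq_one_iff_right₀ (by positivity) hv3).1 ?_
      rw [← map_pow, ← map_zpow₀, hk, map_one]
    simp [hk0]
  · have hk : (q ^ 3) ^ k ≠ 0 := zpow_ne_zero k (pow_ne_zero 3 hq0)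
    exact (abWord_burau_ne_smul_one hv hq0 hq1 hl hne _ ((eq_inv_smul_iff₀ hk).2 h)).elim

end BraidGroup3

/-- for every rational `q0 ∉ {0, 1, -1}`, the reduced Burau representation
of `B₃` specialized at `q0` is injective. -/
theorem burau_B3_faithful_at_rational
    (q0 : ℚ) (h0 : q0 ≠ 0) (hone : q0 ≠ 1) (hnegone : q0 ≠ -1)
    (ρ : BraidGroup3 →* Matrix.GeneralLinearGroup (Fin 2) ℚ)
    (h1 : (ρ (σ₃ 0) : Matrix (Fin 2) (Fin 2) ℚ) = !![-q0, q0; 0, 1])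
    (h2 : (ρ (σ₃ 1) : Matrix (Fin 2) (Fin 2) ℚ) = !![1, 0; 1, -q0]) :
    Function.Injective ρ := by
  obtain ⟨p, hp, hpq⟩ := Rat.exists_prime_padicNorm_ne_one hone hnegone
  have := Fact.mk hp
  refine BraidGroup3.injective_of_absoluteValue_ne_one
    (Rat.AbsoluteValue.isNonarchimedean_padic p) h0 ?_ ρ h1 h2
  rw [Rat.AbsoluteValue.padic_eq_padicNorm]
  exact_mod_cast hpq
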